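/- arXiv:1705.03717 — 3 statements merged into one kernel-verified Lean document; each statement's English description precedes it below -/
import Mathlib

section
/- Let n ≥ 1 and let φ : ℝⁿ → ℝ be twice continuously differentiable with compact support. Then there exist constants c > 0 and R > 0, depending only on n and φ, such that for every s ∈ (0,1) and every x ∈ ℝⁿ with |x| ≥ R one has |(−Δ)^s φ(x)| ≤ c C(n,s) (1 + |x|)^{−(n+2s)}. -/
open MeasureTheory Real Filter Set Metric
open scoped ENNReal

noncomputable section

abbrev E (n : ℕ) := EuclideanSpace ℝ (Fin n)

/-- The normalization constant `C(n,s)` of the fractional Laplacian. -/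
def Cns (n : ℕ) (s : ℝ) : ℝ :=
  2 ^ (2 * s) * s * Real.Gamma ((n : ℝ) / 2 + s) /
    (Real.pi ^ ((n : ℝ) / 2) * Real.Gamma (1 - s))

/-- The fractional Laplacian of a (twice continuously differentiable, bounded) function,
via the second-difference formula. -/
def fracLap (n : ℕ) (s : ℝ) (φ : E n → ℝ) (x : E n) : ℝ :=
  (Cns n s / 2) * ∫ y : E n, (2 * φ x - φ (x + y) - φ (x - y)) / ‖y‖ ^ ((n : ℝ) + 2 * s)

/-- The principal value `lim_{ε→0⁺} ∫_{|y-x|>ε} (u x - u y)/|x-y|^{n+2s} dy` exists and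
equals `L`. -/
def pvIntAt (n : ℕ) (s : ℝ) (u : E n → ℝ) (x : E n) (L : ℝ) : Prop :=
  Tendsto (fun ε : ℝ =>
      ∫ y in {y : E n | ε < ‖y - x‖}, (u x - u y) / ‖x - y‖ ^ ((n : ℝ) + 2 * s))
    (nhdsWithin 0 (Set.Ioi 0)) (nhds L)

/-- `u` is `s`-harmonic in the principal-value sense at `x`. -/
def sHarmonicAt (n : ℕ) (s : ℝ) (u : E n → ℝ) (x : E n) : Prop := pvIntAt n s u x 0

/-- The principal value fractional Laplacian (with the constant `C(n,s)`) of `u` at `x`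
exists and equals `L`. -/
def pvFracLapAt (n : ℕ) (s : ℝ) (u : E n → ℝ) (x : E n) (L : ℝ) : Prop :=
  Tendsto (fun ε : ℝ =>
      Cns n s * ∫ y in {y : E n | ε < ‖y - x‖}, (u x - u y) / ‖x - y‖ ^ ((n : ℝ) + 2 * s))
    (nhdsWithin 0 (Set.Ioi 0)) (nhds L)

/-- `u` is `γ`-homogeneous. -/
def IsHomog (n : ℕ) (γ : ℝ) (u : E n → ℝ) : Prop :=
  u 0 = 0 ∧ ∀ x : E n, x ≠ 0 → ∀ t : ℝ, 0 < t → u (t • x) = t ^ γ * u x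

/-- `C` is an open cone with vertex at `0`. -/
def IsOpenCone (n : ℕ) (C : Set (E n)) : Prop :=
  IsOpen C ∧ C.Nonempty ∧ ∀ x ∈ C, ∀ t : ℝ, 0 < t → t • x ∈ C

/-- The classical Laplacian. -/
def lap (n : ℕ) (φ : E n → ℝ) (x : E n) : ℝ :=
  ∑ i : Fin n,
    fderiv ℝ (fun y => fderiv ℝ φ y (EuclideanSpace.single i 1)) x (EuclideanSpace.single i 1)

/-- Integral over the unit sphere `S^{n-1}` with respect to the surface measure. -/
def sphereInt (n : ℕ) (u : E n → ℝ) : ℝ :=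
  ∫ z : Metric.sphere (0 : E n) 1, u ↑z ∂((volume : Measure (E n)).toSphere)

set_option maxHeartbeats 1000000 in
theorem statement1 (n : ℕ) (hn : 1 ≤ n) (φ : E n → ℝ)
    (hφ : ContDiff ℝ 2 φ) (hsupp : HasCompactSupport φ) :
    ∃ c : ℝ, 0 < c ∧ ∃ R : ℝ, 0 < R ∧ ∀ s ∈ Set.Ioo (0 : ℝ) 1, ∀ x : E n, R ≤ ‖x‖ →
      |fracLap n s φ x| ≤ c * Cns n s * (1 + ‖x‖) ^ (-((n : ℝ) + 2 * s)) := by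
  obtain ⟨r0, hr0⟩ := hsupp.isCompact.isBounded.subset_closedBall 0
  set r : ℝ := |r0| + 1 with hrdef
  have hrpos : (0:ℝ) < r := by positivity
  have hr0' : tsupport φ ⊆ closedBall 0 r :=
    hr0.trans (closedBall_subset_closedBall (by
      have := le_abs_self r0; simp only [hrdef]; linarith))
  obtain ⟨M0, hM0⟩ := hsupp.exists_bound_of_continuous hφ.continuous
  have hM0nn : (0:ℝ) ≤ M0 := le_trans (norm_nonneg _) (hM0 0)
  set V : ℝ := (volume (closedBall (0:E n) r)).toReal with hVdef
  have hVnn : (0:ℝ) ≤ V := ENNReal.toReal_nonneg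
  set K : ℝ := 2 ^ (n+2) with hKdef
  have hKpos : (0:ℝ) < K := by positivity
  refine ⟨K * 2 * (M0+1) * (V+1), by positivity, 2*r+2, by positivity, ?_⟩
  rintro s ⟨hs0, hs1⟩ x hx
  set p := (n:ℝ) + 2*s with hpdef
  have hppos : 0 < p := by positivity
  have hple : p ≤ (n:ℝ) + 2 := by simp only [hpdef]; linarith
  have hCns : 0 < Cns n s := by
    have h1 : 0 < Real.Gamma ((n:ℝ)/2 + s) := Real.Gamma_pos_of_pos (by positivity)
    have h2 : 0 < Real.Gamma (1 - s) := Real.Gamma_pos_of_pos (by linarith)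
    have h3 : (0:ℝ) < (2:ℝ) ^ (2*s) := Real.rpow_pos_of_pos (by norm_num) _
    have h4 : (0:ℝ) < Real.pi ^ ((n:ℝ)/2) := Real.rpow_pos_of_pos Real.pi_pos _
    unfold Cns
    positivity
  have hφx : φ x = 0 := by
    apply image_eq_zero_of_notMem_tsupport
    intro h
    have := hr0' h
    rw [mem_closedBall, dist_zero_right] at this
    linarith
  set a := (1 + ‖x‖)/2 with hadef
  have hapos : (0:ℝ) < a := by
    have := norm_nonneg x; simp only [hadef]; linarith
  have hax : a ≤ ‖x‖ - r := by simp only [hadef]; linarith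
  set S := closedBall (-x) r ∪ closedBall x r with hSdef
  have hSm : MeasurableSet S := measurableSet_closedBall.union measurableSet_closedBall
  have hball : ∀ z : E n, volume (closedBall z r) = volume (closedBall (0:E n) r) := fun z =>
    Measure.addHaar_closedBall_center volume z r
  have hSfin : volume S < ⊤ := by
    refine lt_of_le_of_lt (measure_union_le _ _) ?_
    rw [hball (-x), hball x]
    exact ENNReal.add_lt_top.2 ⟨measure_closedBall_lt_top, measure_closedBall_lt_top⟩
  have hSvol : (volume S).toReal ≤ 2 * V := by
    have h1 : volume S ≤ 2 * volume (closedBall (0:E n) r) := by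
      refine (measure_union_le _ _).trans ?_
      rw [hball (-x), hball x, two_mul]
    have h2 : (2 : ℝ≥0∞) * volume (closedBall (0:E n) r) ≠ ⊤ :=
      ENNReal.mul_ne_top (by norm_num) measure_closedBall_lt_top.ne
    calc (volume S).toReal ≤ ((2:ℝ≥0∞) * volume (closedBall (0:E n) r)).toReal :=
          ENNReal.toReal_mono h2 h1
      _ = 2 * V := by rw [ENNReal.toReal_mul]; norm_num [hVdef]
  set g : E n → ℝ := S.indicator (fun _ => 2 * M0 / a ^ p) with hgdef
  have hgInt : Integrable g := by
    rw [hgdef, integrable_indicator_iff hSm]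
    exact integrableOn_const hSfin.ne
  have hbound : ∀ y : E n, ‖(2 * φ x - φ (x + y) - φ (x - y)) / ‖y‖ ^ p‖ ≤ g y := by
    intro y
    by_cases hy : y ∈ S
    · have hynorm : a ≤ ‖y‖ := by
        rcases hy with h | h
        · rw [mem_closedBall, dist_eq_norm, sub_neg_eq_add] at h
          have h2 : ‖x‖ ≤ ‖y + x‖ + ‖y‖ := by
            calc ‖x‖ = ‖(y + x) - y‖ := by rw [show (y + x) - y = x by abel]
              _ ≤ ‖y + x‖ + ‖y‖ := norm_sub_le _ _
          linarith
        · rw [mem_closedBall, dist_eq_norm] at h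
          have h2 : ‖x‖ ≤ ‖y - x‖ + ‖y‖ := by
            calc ‖x‖ = ‖(y - x) - y‖ := by rw [show (y - x) - y = -x by abel, norm_neg]
              _ ≤ ‖y - x‖ + ‖y‖ := norm_sub_le _ _
          linarith
      have hden : a ^ p ≤ ‖y‖ ^ p := Real.rpow_le_rpow hapos.le hynorm hppos.le
      have hap : 0 < a ^ p := Real.rpow_pos_of_pos hapos _
      have hnum : |2 * φ x - φ (x + y) - φ (x - y)| ≤ 2 * M0 := by
        have hA : |φ (x+y)| ≤ M0 := hM0 _
        have hB : |φ (x-y)| ≤ M0 := hM0 _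
        rw [abs_le] at hA hB ⊢
        constructor <;> [skip; skip] <;> (rw [hφx]; nlinarith [hA.1, hA.2, hB.1, hB.2])
      have heq : ‖(2 * φ x - φ (x + y) - φ (x - y)) / ‖y‖ ^ p‖
          = |2 * φ x - φ (x + y) - φ (x - y)| / ‖y‖ ^ p := by
        rw [Real.norm_eq_abs, abs_div, abs_of_nonneg (Real.rpow_nonneg (norm_nonneg y) p)]
      rw [heq, hgdef, Set.indicator_of_mem hy]
      exact div_le_div₀ (by linarith) hnum hap hden
    · rw [hgdef, Set.indicator_of_notMem hy]
      have h1 : φ (x + y) = 0 := by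
        apply image_eq_zero_of_notMem_tsupport
        intro h
        have hh := hr0' h
        rw [mem_closedBall, dist_zero_right] at hh
        exact hy (Or.inl (by
          rw [mem_closedBall, dist_eq_norm, sub_neg_eq_add, add_comm]; exact hh))
      have h2 : φ (x - y) = 0 := by
        apply image_eq_zero_of_notMem_tsupport
        intro h
        have hh := hr0' h
        rw [mem_closedBall, dist_zero_right] at hh
        exact hy (Or.inr (by
          rw [mem_closedBall, dist_eq_norm, ← norm_neg, neg_sub]; exact hh))
      simp [hφx, h1, h2]
  have key : ‖∫ y : E n, (2 * φ x - φ (x + y) - φ (x - y)) / ‖y‖ ^ p‖ ≤ ∫ y, g y :=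
    norm_integral_le_of_norm_le hgInt (ae_of_all _ hbound)
  have hgint : ∫ y, g y = (volume S).toReal * (2 * M0 / a ^ p) := by
    rw [hgdef, integral_indicator_const _ hSm, smul_eq_mul, measureReal_def]
  set T : ℝ := (1 + ‖x‖) ^ (-p) with hTdef
  have hTpos : 0 < T := Real.rpow_pos_of_pos (by have := norm_nonneg x; linarith) _
  have hxp : (0:ℝ) < (1 + ‖x‖) ^ p := Real.rpow_pos_of_pos (by have := norm_nonneg x; linarith) _
  have hainv : 2 * M0 / a ^ p ≤ 2 * M0 * K * T := by
    have hap : a ^ p = (1 + ‖x‖) ^ p / 2 ^ p := by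
      rw [hadef, Real.div_rpow (by have := norm_nonneg x; linarith) (by norm_num)]
    have h2ppos : (0:ℝ) < (2:ℝ) ^ p := Real.rpow_pos_of_pos (by norm_num) _
    have h2p : (2:ℝ) ^ p ≤ K := by
      rw [hKdef]
      calc (2:ℝ) ^ p ≤ (2:ℝ) ^ ((n:ℝ)+2) := Real.rpow_le_rpow_of_exponent_le one_le_two hple
        _ = (2:ℝ) ^ (n+2) := by
            rw [show ((n:ℝ)+2) = ((n+2 : ℕ) : ℝ) by push_cast; ring, Real.rpow_natCast]
    have hT : T = ((1 + ‖x‖) ^ p)⁻¹ := by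
      rw [hTdef, Real.rpow_neg (by have := norm_nonneg x; linarith)]
    rw [hap, div_div_eq_mul_div, hT, div_le_iff₀ hxp]
    calc 2 * M0 * 2 ^ p ≤ 2 * M0 * K :=
          mul_le_mul_of_nonneg_left h2p (by linarith)
      _ = 2 * M0 * K * (((1 + ‖x‖) ^ p)⁻¹ * (1 + ‖x‖) ^ p) := by
          rw [inv_mul_cancel₀ hxp.ne', mul_one]
      _ = 2 * M0 * K * ((1 + ‖x‖) ^ p)⁻¹ * (1 + ‖x‖) ^ p := by ring
  have hfinal : |fracLap n s φ x| ≤ (Cns n s / 2) * ((2*V) * (2 * M0 * K * T)) := by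
    rw [fracLap]
    rw [abs_mul, abs_of_pos (by positivity : (0:ℝ) < Cns n s / 2)]
    refine mul_le_mul_of_nonneg_left ?_ (by positivity)
    calc |∫ y : E n, (2 * φ x - φ (x + y) - φ (x - y)) / ‖y‖ ^ ((n:ℝ) + 2*s)|
        ≤ ∫ y, g y := by rw [← Real.norm_eq_abs, ← hpdef]; exact key
      _ = (volume S).toReal * (2 * M0 / a ^ p) := hgint
      _ ≤ (2*V) * (2 * M0 * K * T) := by
          refine mul_le_mul hSvol hainv (by positivity) (by linarith)
  refine hfinal.trans ?_
  have : (Cns n s / 2) * ((2*V) * (2 * M0 * K * T)) = (2 * K * (V * M0)) * Cns n s * T := by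
    ring
  rw [this]
  have hc : 2 * K * (V * M0) ≤ K * 2 * (M0+1) * (V+1) := by nlinarith [hKpos, hVnn, hM0nn, mul_nonneg hVnn hM0nn]
  calc (2 * K * (V * M0)) * Cns n s * T ≤ (K * 2 * (M0+1) * (V+1)) * Cns n s * T := by
        have := mul_le_mul_of_nonneg_right hc hCns.le
        exact mul_le_mul_of_nonneg_right this hTpos.le
    _ = K * 2 * (M0+1) * (V+1) * Cns n s * T := by ring
end
end

section
/- Let n ≥ 2, let C ⊊ ℝⁿ be an open cone with vertex at 0, and let s ∈ (0,1). Let γ_s ∈ (0,2s) and γ* ∈ (0,2s), and let u, v : ℝⁿ → [0,∞) be continuous on ℝⁿ, twice continuously differentiable in C, identically 0 on ℝⁿ∖C, respectively γ_s- and γ*-homogeneous. Assume: (i) there are constants 0 < a₁ ≤ a₂ with a₁ |x|^{γ_s−s} dist(x,∂C)^s ≤ u(x) ≤ a₂ |x|^{γ_s−s} dist(x,∂C)^s for all x ∈ C, and constants 0 < b₁ ≤ b₂ with b₁ |x|^{γ*−1} dist(x,∂C) ≤ v(x) ≤ b₂ |x|^{γ*−1} dist(x,∂C) for all x ∈ C;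 (ii) u is s-harmonic in the principal-value sense at every point of C; (iii) for every x ∈ C the principal value (−Δ)^s v(x) = lim_{ε→0⁺} C(n,s) ∫_{|y−x|>ε} (v(x) − v(y))/|x−y|^{n+2s} dy exists, is a continuous function of x ∈ C, and satisfies (−Δ)^s v(x) ≤ 0. Then γ_s ≤ γ*. -/
open MeasureTheory Real Filter Set Metric
open scoped ENNReal

noncomputable section

/-- Integrability of the PV integrand away from the singularity, for a continuous function
with subcritical polynomial growth. -/
lemma aux_integrable (n : ℕ) (hn : 1 ≤ n) (s : ℝ) (hs0 : 0 < s)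
    (γ c : ℝ) (hγ : 0 < γ) (hγ2 : γ < 2 * s) (hc : 0 ≤ c)
    (f : E n → ℝ) (hf : Continuous f) (hfb : ∀ y, |f y| ≤ c * ‖y‖ ^ γ)
    (x₀ : E n) (ε : ℝ) (hε : 0 < ε) :
    IntegrableOn (fun y => (f x₀ - f y) / ‖x₀ - y‖ ^ ((n : ℝ) + 2 * s))
      {y : E n | ε < ‖y - x₀‖} := by
  set p : ℝ := (n : ℝ) + 2 * s with hpdef
  have hnpos : (0:ℝ) < n := by exact_mod_cast Nat.lt_of_lt_of_le Nat.zero_lt_one hn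
  have hp : 0 < p := by positivity
  have hpγ : (Module.finrank ℝ (E n) : ℝ) < p - γ := by
    rw [finrank_euclideanSpace_fin]; simp only [hpdef]; linarith
  set A : ℝ := max 1 ‖x₀‖ with hA
  have hA1 : (1:ℝ) ≤ A := le_max_left _ _
  have hA0 : (0:ℝ) < A := lt_of_lt_of_le one_pos hA1
  set K : ℝ := 2 * c * A ^ γ * (1 + 1/ε) ^ p with hK
  have hK0 : 0 ≤ K := by positivity
  have hS : MeasurableSet {y : E n | ε < ‖y - x₀‖} := by
    have : IsOpen {y : E n | ε < ‖y - x₀‖} :=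
      isOpen_lt continuous_const (continuous_id.sub continuous_const).norm
    exact this.measurableSet
  have hg : Integrable (fun y : E n => K * (1 + ‖y - x₀‖) ^ (γ - p)) := by
    have h0 : Integrable (fun y : E n => (1 + ‖y‖) ^ (-(p - γ))) :=
      integrable_one_add_norm hpγ
    have h1 := h0.comp_sub_right x₀
    have : (fun y : E n => (1 + ‖y - x₀‖) ^ (-(p - γ)))
        = fun y : E n => (1 + ‖y - x₀‖) ^ (γ - p) := by
      funext y; ring_nf
    rw [this] at h1
    exact h1.const_mul K
  have hmeas : AEStronglyMeasurable
      (fun y : E n => (f x₀ - f y) / ‖x₀ - y‖ ^ p)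
      (volume.restrict {y : E n | ε < ‖y - x₀‖}) := by
    apply Measurable.aestronglyMeasurable
    apply Measurable.div
    · exact (measurable_const.sub hf.measurable)
    · exact ((continuous_const.sub continuous_id).norm.rpow_const
        (fun x => Or.inr hp.le)).measurable
  refine (hg.integrableOn.mono' hmeas ?_)
  rw [ae_restrict_iff' hS]
  filter_upwards with y hy
  replace hy : ε < ‖y - x₀‖ := hy
  set r : ℝ := ‖y - x₀‖ with hr
  have hr0 : 0 < r := lt_trans hε hy
  have hxy : ‖x₀ - y‖ = r := by rw [hr, norm_sub_rev]
  have h1r : (0:ℝ) < 1 + r := by linarith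
  have hnum : |f x₀ - f y| ≤ 2 * c * A ^ γ * (1 + r) ^ γ := by
    have b1 : |f x₀| ≤ c * ‖x₀‖ ^ γ := hfb x₀
    have b2 : |f y| ≤ c * ‖y‖ ^ γ := hfb y
    have e1 : ‖x₀‖ ≤ A * (1 + r) := by
      have : ‖x₀‖ ≤ A := le_max_right _ _
      nlinarith [hr0.le, hA0.le]
    have e2 : ‖y‖ ≤ A * (1 + r) := by
      have : ‖y‖ ≤ ‖x₀‖ + r := by
        have := norm_sub_norm_le y x₀
        rw [← hr] at this; linarith [abs_le.mp (abs_norm_sub_norm_le y x₀)]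
      have h2 : ‖x₀‖ ≤ A := le_max_right _ _
      nlinarith [hr0.le, hA0.le]
    have e1' : ‖x₀‖ ^ γ ≤ (A * (1+r)) ^ γ := Real.rpow_le_rpow (norm_nonneg _) e1 hγ.le
    have e2' : ‖y‖ ^ γ ≤ (A * (1+r)) ^ γ := Real.rpow_le_rpow (norm_nonneg _) e2 hγ.le
    have emul : (A * (1+r)) ^ γ = A ^ γ * (1+r) ^ γ := Real.mul_rpow hA0.le h1r.le
    calc |f x₀ - f y| ≤ |f x₀| + |f y| := abs_sub _ _
      _ ≤ c * (A * (1+r)) ^ γ + c * (A * (1+r)) ^ γ := by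
          nlinarith [Real.rpow_nonneg (mul_nonneg hA0.le h1r.le) γ]
      _ = 2 * c * A ^ γ * (1 + r) ^ γ := by rw [emul]; ring
  have hker : (1 + r) ^ p ≤ (1 + 1/ε) ^ p * r ^ p := by
    have e : 1 + r ≤ (1 + 1/ε) * r := by
      have : 1 ≤ r / ε := (one_le_div hε).mpr hy.le
      have : 1 ≤ (1/ε) * r := by rw [one_div, inv_mul_eq_div]; exact this
      nlinarith
    calc (1 + r) ^ p ≤ ((1 + 1/ε) * r) ^ p := Real.rpow_le_rpow h1r.le e hp.le
      _ = (1 + 1/ε) ^ p * r ^ p := Real.mul_rpow (by positivity) hr0.le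
  have hrp : 0 < r ^ p := Real.rpow_pos_of_pos hr0 p
  have h1rp : 0 < (1 + r) ^ p := Real.rpow_pos_of_pos h1r p
  have hgy : K * (1 + r) ^ (γ - p) = K * (1 + r) ^ γ / (1 + r) ^ p := by
    rw [Real.rpow_sub h1r, mul_div_assoc]
  show ‖(f x₀ - f y) / ‖x₀ - y‖ ^ p‖ ≤ K * (1 + ‖y - x₀‖) ^ (γ - p)
  rw [← hr, Real.norm_eq_abs, hxy, abs_div, abs_of_nonneg hrp.le, hgy]
  rw [div_le_div_iff₀ hrp h1rp]
  calc |f x₀ - f y| * (1 + r) ^ p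
      ≤ (2 * c * A ^ γ * (1 + r) ^ γ) * ((1 + 1/ε) ^ p * r ^ p) := by
        apply mul_le_mul hnum hker h1rp.le
        positivity
    _ = K * (1 + r) ^ γ * r ^ p := by rw [hK]; ring

set_option maxHeartbeats 2000000 in
theorem statement11 (n : ℕ) (hn : 2 ≤ n) (C : Set (E n)) (hC : IsOpenCone n C)
    (hCne : C ≠ Set.univ) (s : ℝ) (hs : s ∈ Set.Ioo (0 : ℝ) 1)
    (γs γstar : ℝ) (hγs : γs ∈ Set.Ioo (0 : ℝ) (2 * s)) (hγstar : γstar ∈ Set.Ioo (0 : ℝ) (2 * s))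
    (u v : E n → ℝ) (huc : Continuous u) (hvc : Continuous v)
    (huC2 : ContDiffOn ℝ 2 u C) (hvC2 : ContDiffOn ℝ 2 v C)
    (hu0 : ∀ x, 0 ≤ u x) (hv0 : ∀ x, 0 ≤ v x)
    (huz : ∀ x ∉ C, u x = 0) (hvz : ∀ x ∉ C, v x = 0)
    (hhomu : IsHomog n γs u) (hhomv : IsHomog n γstar v)
    (a₁ a₂ : ℝ) (ha₁ : 0 < a₁) (ha : a₁ ≤ a₂)
    (hga : ∀ x ∈ C, a₁ * ‖x‖ ^ (γs - s) * Metric.infDist x (frontier C) ^ s ≤ u x ∧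
      u x ≤ a₂ * ‖x‖ ^ (γs - s) * Metric.infDist x (frontier C) ^ s)
    (b₁ b₂ : ℝ) (hb₁ : 0 < b₁) (hb : b₁ ≤ b₂)
    (hgb : ∀ x ∈ C, b₁ * ‖x‖ ^ (γstar - 1) * Metric.infDist x (frontier C) ≤ v x ∧
      v x ≤ b₂ * ‖x‖ ^ (γstar - 1) * Metric.infDist x (frontier C))
    (hharm : ∀ x ∈ C, sHarmonicAt n s u x)
    (Lv : E n → ℝ) (hLvcont : ContinuousOn Lv C)
    (hLv : ∀ x ∈ C, pvFracLapAt n s v x (Lv x) ∧ Lv x ≤ 0) :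
    γs ≤ γstar := by
  by_contra hcon
  push_neg at hcon
  obtain ⟨hs0, hs1⟩ := hs
  obtain ⟨hγs0, hγs2⟩ := hγs
  obtain ⟨hγstar0, hγstar2⟩ := hγstar
  obtain ⟨hCopen, ⟨x₁, hx₁⟩, hCcone⟩ := hC
  have hn1 : 1 ≤ n := le_trans one_le_two hn
  -- 0 is not in C
  have h0C : (0 : E n) ∉ C := by
    intro h0
    apply hCne
    ext x
    simp only [Set.mem_univ, iff_true]
    rcases eq_or_ne x 0 with rfl | hx
    · exact h0
    · obtain ⟨r, hr, hball⟩ := Metric.isOpen_iff.mp hCopen 0 h0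
      have hxn : 0 < ‖x‖ := norm_pos_iff.mpr hx
      set t : ℝ := r / (2 * ‖x‖) with ht
      have htpos : 0 < t := by positivity
      have htx : t • x ∈ C := by
        apply hball
        simp only [Metric.mem_ball, dist_zero_right, norm_smul, Real.norm_eq_abs,
          abs_of_pos htpos]
        have he : t * ‖x‖ = r / 2 := by rw [ht]; field_simp
        rw [he]; linarith only [hr]
      have := hCcone _ htx t⁻¹ (by positivity)
      rwa [smul_smul, inv_mul_cancel₀ htpos.ne', one_smul] at this
  have hxne : ∀ x ∈ C, x ≠ 0 := fun x hx => ne_of_mem_of_not_mem hx h0C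
  have hnx : ∀ x ∈ C, 0 < ‖x‖ := fun x hx => norm_pos_iff.mpr (hxne x hx)
  -- 0 is in the frontier of C
  have h0cl : (0 : E n) ∈ closure C := by
    have htend : Tendsto (fun t : ℝ => t • x₁) (nhdsWithin 0 (Set.Ioi 0)) (nhds 0) := by
      have hc : Continuous fun t : ℝ => t • x₁ := continuous_id.smul continuous_const
      have := (hc.tendsto 0).mono_left (nhdsWithin_le_nhds (s := Set.Ioi (0:ℝ)))
      simpa using this
    refine mem_closure_of_tendsto htend ?_
    filter_upwards [self_mem_nhdsWithin] with t ht
    exact hCcone x₁ hx₁ t ht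
  have h0fr : (0 : E n) ∈ frontier C := by
    rw [frontier, hCopen.interior_eq]
    exact ⟨h0cl, h0C⟩
  have hfr_ne : (frontier C).Nonempty := ⟨0, h0fr⟩
  have hd_le : ∀ x : E n, infDist x (frontier C) ≤ ‖x‖ := by
    intro x
    have := infDist_le_dist_of_mem (x := x) h0fr
    rwa [dist_zero_right] at this
  have hd_pos : ∀ x ∈ C, 0 < infDist x (frontier C) := by
    intro x hx
    refine (isClosed_frontier.notMem_iff_infDist_pos hfr_ne).mp ?_
    rw [frontier, hCopen.interior_eq]
    exact fun h => h.2 hx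
  have hd_nonneg : ∀ x : E n, 0 ≤ infDist x (frontier C) := fun x => infDist_nonneg
  -- positivity of u and v on C
  have hu_pos : ∀ x ∈ C, 0 < u x := by
    intro x hx
    refine lt_of_lt_of_le ?_ (hga x hx).1
    have h1 := hnx x hx
    have h2 := hd_pos x hx
    positivity
  have hv_pos : ∀ x ∈ C, 0 < v x := by
    intro x hx
    refine lt_of_lt_of_le ?_ (hgb x hx).1
    have h1 := hnx x hx
    have h2 := hd_pos x hx
    positivity
  -- global polynomial bounds
  have hu_le : ∀ y, |u y| ≤ a₂ * ‖y‖ ^ γs := by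
    intro y
    rw [abs_of_nonneg (hu0 y)]
    by_cases hy : y ∈ C
    · have h1 := (hga y hy).2
      have h2 : (infDist y (frontier C)) ^ s ≤ ‖y‖ ^ s :=
        Real.rpow_le_rpow (hd_nonneg y) (hd_le y) hs0.le
      have h3 : ‖y‖ ^ (γs - s) * ‖y‖ ^ s = ‖y‖ ^ γs := by
        rw [← Real.rpow_add (hnx y hy)]; ring_nf
      calc u y ≤ a₂ * ‖y‖ ^ (γs - s) * (infDist y (frontier C)) ^ s := h1
        _ ≤ a₂ * ‖y‖ ^ (γs - s) * ‖y‖ ^ s := by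
            apply mul_le_mul_of_nonneg_left h2
            have := hnx y hy
            have ha₂ : (0:ℝ) < a₂ := lt_of_lt_of_le ha₁ ha
            positivity
        _ = a₂ * ‖y‖ ^ γs := by rw [mul_assoc, h3]
    · rw [huz y hy]
      have : (0:ℝ) < a₂ := lt_of_lt_of_le ha₁ ha
      positivity
  have hv_le : ∀ y, |v y| ≤ b₂ * ‖y‖ ^ γstar := by
    intro y
    rw [abs_of_nonneg (hv0 y)]
    by_cases hy : y ∈ C
    · have h1 := (hgb y hy).2
      have h3 : ‖y‖ ^ (γstar - 1) * ‖y‖ = ‖y‖ ^ γstar := by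
        nth_rewrite 2 [← Real.rpow_one ‖y‖]
        rw [← Real.rpow_add (hnx y hy)]; ring_nf
      calc v y ≤ b₂ * ‖y‖ ^ (γstar - 1) * infDist y (frontier C) := h1
        _ ≤ b₂ * ‖y‖ ^ (γstar - 1) * ‖y‖ := by
            apply mul_le_mul_of_nonneg_left (hd_le y)
            have := hnx y hy
            have hb₂ : (0:ℝ) < b₂ := lt_of_lt_of_le hb₁ hb
            positivity
        _ = b₂ * ‖y‖ ^ γstar := by rw [mul_assoc, h3]
    · rw [hvz y hy]
      have : (0:ℝ) < b₂ := lt_of_lt_of_le hb₁ hb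
      positivity
  -- the comparison constant
  obtain ⟨l, hl⟩ : ∃ l : ℝ, l = v x₁ / (2 * u x₁) := ⟨_, rfl⟩
  have hl0 : 0 < l := by
    rw [hl]
    have := hu_pos x₁ hx₁; have := hv_pos x₁ hx₁; positivity
  obtain ⟨w, hw⟩ : ∃ w : E n → ℝ, w = fun y => v y - l * u y := ⟨_, rfl⟩
  have hwc : Continuous w := by rw [hw]; exact hvc.sub (continuous_const.mul huc)
  have hwz : ∀ y ∉ C, w y = 0 := by
    intro y hy; simp only [hw, huz y hy, hvz y hy, mul_zero, sub_zero]
  have hwx₁ : 0 < w x₁ := by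
    have hu1 := hu_pos x₁ hx₁
    have hv1 := hv_pos x₁ hx₁
    have : w x₁ = v x₁ / 2 := by
      simp only [hw, hl]; field_simp; ring
    rw [this]; positivity
  -- far away, w ≤ 0
  obtain ⟨δ, hδ⟩ : ∃ δ : ℝ, δ = γs - γstar := ⟨_, rfl⟩
  have hδ0 : 0 < δ := by simp only [hδ]; linarith only [hcon]
  obtain ⟨β, hβ⟩ : ∃ β : ℝ, β = (b₂ / (l * a₁)) ^ (1/δ) := ⟨_, rfl⟩
  have hba : 0 < b₂ / (l * a₁) := by
    have : (0:ℝ) < b₂ := lt_of_lt_of_le hb₁ hb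
    positivity
  have hβ0 : 0 < β := by rw [hβ]; exact Real.rpow_pos_of_pos hba _
  obtain ⟨R, hR⟩ : ∃ R : ℝ, R = max 1 β := ⟨_, rfl⟩
  have hR1 : (1:ℝ) ≤ R := by rw [hR]; exact le_max_left _ _
  have hfar : ∀ y : E n, R ≤ ‖y‖ → w y ≤ 0 := by
    intro y hy
    rw [hR] at hy
    by_cases hyC : y ∈ C
    · have hyp : 0 < ‖y‖ := hnx y hyC
      have hy1 : (1:ℝ) ≤ ‖y‖ := le_trans (le_max_left _ _) hy
      have hdp : 0 < infDist y (frontier C) := hd_pos y hyC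
      set d : ℝ := infDist y (frontier C) with hd
      have hdy : d ≤ ‖y‖ := hd_le y
      have c1 : d ≤ d ^ s * ‖y‖ ^ (1 - s) := by
        have e1 : d = d ^ s * d ^ (1 - s) := by
          rw [← Real.rpow_add hdp]; norm_num
        have e2 : d ^ (1 - s) ≤ ‖y‖ ^ (1 - s) :=
          Real.rpow_le_rpow hdp.le hdy (by linarith only [hs1])
        calc d = d ^ s * d ^ (1-s) := e1
          _ ≤ d ^ s * ‖y‖ ^ (1-s) := by
              apply mul_le_mul_of_nonneg_left e2 (Real.rpow_nonneg hdp.le s)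
      have c4 : b₂ * ‖y‖ ^ (γstar - γs) ≤ l * a₁ := by
        have hβy : β ≤ ‖y‖ := le_trans (le_max_right _ _) hy
        have e1 : β ^ δ = b₂ / (l * a₁) := by
          rw [hβ, ← Real.rpow_mul hba.le, one_div, inv_mul_cancel₀ hδ0.ne', Real.rpow_one]
        have e2 : b₂ / (l * a₁) ≤ ‖y‖ ^ δ := by
          rw [← e1]
          exact Real.rpow_le_rpow hβ0.le hβy hδ0.le
        have hla : (0:ℝ) < l * a₁ := by positivity
        have e3 : b₂ ≤ l * a₁ * ‖y‖ ^ δ := by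
          have h5 := (div_le_iff₀ hla).mp e2
          rw [mul_comm (l * a₁)]
          exact h5
        have hyd : 0 < ‖y‖ ^ δ := Real.rpow_pos_of_pos hyp δ
        have e4 : ‖y‖ ^ (γstar - γs) = (‖y‖ ^ δ)⁻¹ := by
          rw [show γstar - γs = -δ from by rw [hδ]; ring, Real.rpow_neg hyp.le]
        calc b₂ * ‖y‖ ^ (γstar - γs) = b₂ * (‖y‖ ^ δ)⁻¹ := by rw [e4]
          _ ≤ (l * a₁ * ‖y‖ ^ δ) * (‖y‖ ^ δ)⁻¹ := by
              apply mul_le_mul_of_nonneg_right e3 (by positivity)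
          _ = l * a₁ := by field_simp
      have key : v y ≤ l * u y := by
        have h1 := (hgb y hyC).2
        have h2 := (hga y hyC).1
        have c3 : ‖y‖ ^ (γstar - 1) * ‖y‖ ^ (1 - s) = ‖y‖ ^ (γstar - γs) * ‖y‖ ^ (γs - s) := by
          rw [← Real.rpow_add hyp, ← Real.rpow_add hyp]; ring_nf
        have hds : 0 ≤ d ^ s := Real.rpow_nonneg hdp.le s
        have hb2 : (0:ℝ) < b₂ := lt_of_lt_of_le hb₁ hb
        calc v y ≤ b₂ * ‖y‖ ^ (γstar - 1) * d := h1
          _ ≤ b₂ * ‖y‖ ^ (γstar - 1) * (d ^ s * ‖y‖ ^ (1 - s)) := by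
              apply mul_le_mul_of_nonneg_left c1; positivity
          _ = (b₂ * ‖y‖ ^ (γstar - γs)) * (‖y‖ ^ (γs - s) * d ^ s) := by
              rw [show b₂ * ‖y‖ ^ (γstar - 1) * (d ^ s * ‖y‖ ^ (1 - s))
                  = b₂ * (‖y‖ ^ (γstar - 1) * ‖y‖ ^ (1 - s)) * d ^ s from by ring, c3]
              ring
          _ ≤ (l * a₁) * (‖y‖ ^ (γs - s) * d ^ s) := by
              apply mul_le_mul_of_nonneg_right c4; positivity
          _ = l * (a₁ * ‖y‖ ^ (γs - s) * d ^ s) := by ring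
          _ ≤ l * u y := mul_le_mul_of_nonneg_left h2 hl0.le
      simp only [hw]; linarith only [key]
    · rw [hwz y hyC]
  -- maximum of w over a large ball is a global maximum
  obtain ⟨R₀, hR₀⟩ : ∃ R₀ : ℝ, R₀ = max R ‖x₁‖ := ⟨_, rfl⟩
  have hR₀0 : (0:ℝ) ≤ R₀ := by
    rw [hR₀]; exact le_trans (le_trans zero_le_one hR1) (le_max_left _ _)
  obtain ⟨x₀, hx₀K, hx₀max⟩ := (isCompact_closedBall (0 : E n) R₀).exists_isMaxOn
    ⟨0, mem_closedBall_self hR₀0⟩ hwc.continuousOn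
  have hx₁K : x₁ ∈ closedBall (0 : E n) R₀ := by
    rw [mem_closedBall, dist_zero_right, hR₀]; exact le_max_right _ _
  have hM : 0 < w x₀ := lt_of_lt_of_le hwx₁ (hx₀max hx₁K)
  have hglobal : ∀ y, w y ≤ w x₀ := by
    intro y
    by_cases hy : y ∈ closedBall (0 : E n) R₀
    · exact hx₀max hy
    · rw [mem_closedBall, dist_zero_right, not_le, hR₀] at hy
      exact le_trans (hfar y (le_trans (le_max_left _ _) hy.le)) hM.le
  have hx₀C : x₀ ∈ C := by
    by_contra h
    rw [hwz x₀ h] at hM; exact lt_irrefl 0 hM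
  -- a small ball around the boundary point 0 where w < w x₀ / 2
  have hw0 : w 0 = 0 := hwz 0 h0C
  have hopen : IsOpen {y : E n | w y < w x₀ / 2} := isOpen_lt hwc continuous_const
  have h0mem : (0 : E n) ∈ {y : E n | w y < w x₀ / 2} := by
    simp only [Set.mem_setOf_eq, hw0]; positivity
  obtain ⟨ρ, hρ0, hρball⟩ := Metric.isOpen_iff.mp hopen 0 h0mem
  have hx₀n : 0 < ‖x₀‖ := hnx x₀ hx₀C
  obtain ⟨ρ', hρ'⟩ : ∃ ρ' : ℝ, ρ' = min ρ (‖x₀‖ / 2) := ⟨_, rfl⟩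
  have hρ'0 : 0 < ρ' := by rw [hρ']; exact lt_min hρ0 (by positivity)
  have hρ'le : ρ' ≤ ‖x₀‖ / 2 := by rw [hρ']; exact min_le_right _ _
  obtain ⟨ε₀, hε₀⟩ : ∃ ε₀ : ℝ, ε₀ = ‖x₀‖ / 2 := ⟨_, rfl⟩
  have hε₀0 : 0 < ε₀ := by rw [hε₀]; positivity
  obtain ⟨D, hD⟩ : ∃ D : ℝ, D = ‖x₀‖ + ρ' := ⟨_, rfl⟩
  have hD0 : 0 < D := by rw [hD]; positivity
  have hnn0 : (0:ℝ) < n := by exact_mod_cast lt_of_lt_of_le Nat.zero_lt_one hn1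
  have hppos : 0 < (n : ℝ) + 2 * s := by positivity
  have hball_sub : ∀ ε ∈ Set.Ioo (0:ℝ) ε₀,
      ball (0 : E n) ρ' ⊆ {y : E n | ε < ‖y - x₀‖} := by
    intro ε hε y hy
    rw [mem_ball, dist_zero_right] at hy
    have h1 : ‖x₀‖ - ‖y‖ ≤ ‖y - x₀‖ := by
      rw [norm_sub_rev]; exact norm_sub_norm_le x₀ y
    have h2 : ‖y‖ < ‖x₀‖ / 2 := lt_of_lt_of_le hy hρ'le
    show ε < ‖y - x₀‖
    have h3 : ε < ε₀ := hε.2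
    rw [hε₀] at h3
    linarith only [h1, h2, h3]
  -- integrability of the PV integrands
  have ha₂0 : (0:ℝ) ≤ a₂ := le_of_lt (lt_of_lt_of_le ha₁ ha)
  have hb₂0 : (0:ℝ) ≤ b₂ := le_of_lt (lt_of_lt_of_le hb₁ hb)
  have hint_u : ∀ ε : ℝ, 0 < ε → IntegrableOn
      (fun y => (u x₀ - u y) / ‖x₀ - y‖ ^ ((n:ℝ) + 2 * s)) {y : E n | ε < ‖y - x₀‖} :=
    fun ε hε => aux_integrable n hn1 s hs0 γs a₂ hγs0 hγs2 ha₂0 u huc hu_le x₀ ε hε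
  have hint_v : ∀ ε : ℝ, 0 < ε → IntegrableOn
      (fun y => (v x₀ - v y) / ‖x₀ - y‖ ^ ((n:ℝ) + 2 * s)) {y : E n | ε < ‖y - x₀‖} :=
    fun ε hε => aux_integrable n hn1 s hs0 γstar b₂ hγstar0 hγstar2 hb₂0 v hvc hv_le x₀ ε hε
  -- the limits
  have hIu : Tendsto (fun ε : ℝ =>
      ∫ y in {y : E n | ε < ‖y - x₀‖}, (u x₀ - u y) / ‖x₀ - y‖ ^ ((n : ℝ) + 2 * s))
      (nhdsWithin 0 (Set.Ioi 0)) (nhds 0) := hharm x₀ hx₀C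
  have hCpos : 0 < Cns n s := by
    rw [Cns]
    have h1 : 0 < Real.Gamma ((n:ℝ)/2 + s) := Real.Gamma_pos_of_pos (by positivity)
    have h2 : 0 < Real.Gamma (1 - s) := Real.Gamma_pos_of_pos (by linarith only [hs1])
    have h3 : (0:ℝ) < Real.pi := Real.pi_pos
    positivity
  have hIv : Tendsto (fun ε : ℝ =>
      ∫ y in {y : E n | ε < ‖y - x₀‖}, (v x₀ - v y) / ‖x₀ - y‖ ^ ((n : ℝ) + 2 * s))
      (nhdsWithin 0 (Set.Ioi 0)) (nhds ((Cns n s)⁻¹ * Lv x₀)) := by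
    have h2 : Tendsto (fun ε : ℝ => Cns n s *
        ∫ y in {y : E n | ε < ‖y - x₀‖}, (v x₀ - v y) / ‖x₀ - y‖ ^ ((n : ℝ) + 2 * s))
        (nhdsWithin 0 (Set.Ioi 0)) (nhds (Lv x₀)) := (hLv x₀ hx₀C).1
    have h3 := h2.const_mul (Cns n s)⁻¹
    simpa only [inv_mul_cancel_left₀ hCpos.ne'] using h3
  have hW : Tendsto (fun ε : ℝ =>
      (∫ y in {y : E n | ε < ‖y - x₀‖}, (v x₀ - v y) / ‖x₀ - y‖ ^ ((n : ℝ) + 2 * s)) -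
      l * ∫ y in {y : E n | ε < ‖y - x₀‖}, (u x₀ - u y) / ‖x₀ - y‖ ^ ((n : ℝ) + 2 * s))
      (nhdsWithin 0 (Set.Ioi 0)) (nhds ((Cns n s)⁻¹ * Lv x₀ - l * 0)) :=
    hIv.sub (hIu.const_mul l)
  -- uniform positive lower bound for the combined integral
  have hDppos : 0 < D ^ ((n:ℝ) + 2 * s) := Real.rpow_pos_of_pos hD0 _
  have hvol : 0 < (volume (ball (0:E n) ρ')).toReal :=
    ENNReal.toReal_pos (measure_ball_pos volume 0 hρ'0).ne' measure_ball_lt_top.ne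
  obtain ⟨c₀, hc₀⟩ : ∃ c₀ : ℝ,
      c₀ = (volume (ball (0:E n) ρ')).toReal * (w x₀ / 2 / D ^ ((n:ℝ) + 2 * s)) := ⟨_, rfl⟩
  have hc₀0 : 0 < c₀ := by rw [hc₀]; positivity
  have hlow : ∀ᶠ ε in nhdsWithin (0:ℝ) (Set.Ioi 0), c₀ ≤
      (∫ y in {y : E n | ε < ‖y - x₀‖}, (v x₀ - v y) / ‖x₀ - y‖ ^ ((n : ℝ) + 2 * s)) -
      l * ∫ y in {y : E n | ε < ‖y - x₀‖}, (u x₀ - u y) / ‖x₀ - y‖ ^ ((n : ℝ) + 2 * s) := by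
    filter_upwards [Ioo_mem_nhdsGT_of_mem (show (0:ℝ) ∈ Set.Ico 0 ε₀ from ⟨le_refl 0, hε₀0⟩)]
      with ε hε
    obtain ⟨hε1, hε2⟩ := hε
    have hiu := hint_u ε hε1
    have hiv := hint_v ε hε1
    have heqw : (fun y : E n => (w x₀ - w y) / ‖x₀ - y‖ ^ ((n:ℝ) + 2 * s))
        = fun y : E n => (v x₀ - v y) / ‖x₀ - y‖ ^ ((n:ℝ) + 2 * s) -
            l * ((u x₀ - u y) / ‖x₀ - y‖ ^ ((n:ℝ) + 2 * s)) := by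
      funext y; simp only [hw]; ring
    have hiw : IntegrableOn (fun y : E n => (w x₀ - w y) / ‖x₀ - y‖ ^ ((n:ℝ) + 2 * s))
        {y : E n | ε < ‖y - x₀‖} := by
      rw [heqw]; exact hiv.sub (hiu.const_mul l)
    have hsplit : (∫ y in {y : E n | ε < ‖y - x₀‖},
          (w x₀ - w y) / ‖x₀ - y‖ ^ ((n:ℝ) + 2 * s))
        = (∫ y in {y : E n | ε < ‖y - x₀‖}, (v x₀ - v y) / ‖x₀ - y‖ ^ ((n : ℝ) + 2 * s)) -
          l * ∫ y in {y : E n | ε < ‖y - x₀‖}, (u x₀ - u y) / ‖x₀ - y‖ ^ ((n : ℝ) + 2 * s) := by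
      rw [heqw, integral_sub hiv (hiu.const_mul l), integral_const_mul]
    rw [← hsplit]
    have hnn : 0 ≤ᵐ[volume.restrict {y : E n | ε < ‖y - x₀‖}]
        fun y : E n => (w x₀ - w y) / ‖x₀ - y‖ ^ ((n:ℝ) + 2 * s) := by
      filter_upwards with y
      exact div_nonneg (by linarith only [hglobal y]) (Real.rpow_nonneg (norm_nonneg _) _)
    have hBsub := hball_sub ε ⟨hε1, hε2⟩
    have hstep1 : (∫ y in ball (0:E n) ρ', (w x₀ - w y) / ‖x₀ - y‖ ^ ((n:ℝ) + 2 * s))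
        ≤ ∫ y in {y : E n | ε < ‖y - x₀‖}, (w x₀ - w y) / ‖x₀ - y‖ ^ ((n:ℝ) + 2 * s) :=
      setIntegral_mono_set hiw hnn hBsub.eventuallyLE
    have hconst : IntegrableOn (fun _ : E n => w x₀ / 2 / D ^ ((n:ℝ) + 2 * s))
        (ball (0:E n) ρ') := integrableOn_const measure_ball_lt_top.ne
    have hptwise : ∀ y ∈ ball (0:E n) ρ',
        w x₀ / 2 / D ^ ((n:ℝ) + 2 * s) ≤ (w x₀ - w y) / ‖x₀ - y‖ ^ ((n:ℝ) + 2 * s) := by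
      intro y hy
      have hyb := hy
      rw [mem_ball, dist_zero_right] at hyb
      have hwy : w y < w x₀ / 2 := by
        have : y ∈ ball (0 : E n) ρ := by
          rw [mem_ball, dist_zero_right]
          rw [hρ'] at hyb
          exact lt_of_lt_of_le hyb (min_le_left _ _)
        exact hρball this
      have hk1 : ‖x₀ - y‖ ≤ D := by
        have h6 := norm_sub_le x₀ y
        rw [hD]; linarith only [h6, hyb]
      have hk0 : 0 < ‖x₀ - y‖ := by
        have := hBsub hy
        have h4 : ε < ‖y - x₀‖ := this
        rw [norm_sub_rev]; linarith only [h4, hε1]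
      have hkp : ‖x₀ - y‖ ^ ((n:ℝ) + 2 * s) ≤ D ^ ((n:ℝ) + 2 * s) :=
        Real.rpow_le_rpow (norm_nonneg _) hk1 hppos.le
      have hkp0 : 0 < ‖x₀ - y‖ ^ ((n:ℝ) + 2 * s) := Real.rpow_pos_of_pos hk0 _
      have hwb : (0:ℝ) < w x₀ - w y := by linarith only [hM, hwy]
      exact div_le_div₀ hwb.le (by linarith only [hwy]) hkp0 hkp
    have hstep2 : c₀ ≤ ∫ y in ball (0:E n) ρ',
        (w x₀ - w y) / ‖x₀ - y‖ ^ ((n:ℝ) + 2 * s) := by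
      rw [hc₀]
      have h := setIntegral_mono_on hconst (hiw.mono_set hBsub) measurableSet_ball hptwise
      rwa [setIntegral_const, smul_eq_mul] at h
    exact le_trans hstep2 hstep1
  have hfin : c₀ ≤ (Cns n s)⁻¹ * Lv x₀ - l * 0 := ge_of_tendsto hW hlow
  have hLvle : Lv x₀ ≤ 0 := (hLv x₀ hx₀C).2
  have hinv : 0 < (Cns n s)⁻¹ := by positivity
  have hmul : (0:ℝ) ≤ (Cns n s)⁻¹ * -Lv x₀ := mul_nonneg hinv.le (neg_nonneg.mpr hLvle)
  linarith only [hfin, hc₀0, hmul]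
end
end

section
/- Let n ≥ 2, α ∈ (0,1), s₀ ∈ (max{1/2, α}, 1), and 0 < r₁ < r₂, and let A = {x ∈ ℝⁿ : r₁ < |x| < r₂}. Then there exists a constant c > 0, depending only on n, α, r₁, r₂, such that for every γ ∈ [(2s₀−1)/2, 2) and every γ-homogeneous function u : ℝⁿ → [0,∞) with sup_{S^{n−1}} u = 1, u(z₀) = 0 for some z₀ ∈ S^{n−1}, and finite α-Hölder seminorm L = sup_{x,y∈S^{n−1}, x≠y} |u(x)−u(y)|/|x−y|^α on the unit sphere, one has sup_{x,y∈A, x≠y} |u(x)−u(y)|/|x−y|^α ≤ c L. -/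
open MeasureTheory Real Filter Set Metric
open scoped ENNReal

noncomputable section

private lemma rpow_lip {γ r₁ r₂ : ℝ} (hγ0 : 0 < γ) (hγ2 : γ ≤ 2) (h1 : 0 < r₁) (a b : ℝ)
    (ha : a ∈ Set.Icc r₁ r₂) (hb : b ∈ Set.Icc r₁ r₂) :
    |a ^ γ - b ^ γ| ≤ (2 * max 1 r₂ * max 1 r₁⁻¹) * |a - b| := by
  have hderiv : ∀ t ∈ Set.Icc r₁ r₂,
      HasDerivWithinAt (fun s : ℝ => s ^ γ) (γ * t ^ (γ - 1)) (Set.Icc r₁ r₂) t := by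
    intro t ht
    have htpos : 0 < t := lt_of_lt_of_le h1 ht.1
    exact (Real.hasDerivAt_rpow_const (Or.inl htpos.ne')).hasDerivWithinAt
  have hbound : ∀ t ∈ Set.Icc r₁ r₂, ‖γ * t ^ (γ - 1)‖ ≤ 2 * max 1 r₂ * max 1 r₁⁻¹ := by
    intro t ht
    have htpos : 0 < t := lt_of_lt_of_le h1 ht.1
    have hpow : t ^ (γ - 1) ≤ max 1 r₂ * max 1 r₁⁻¹ := by
      rcases le_or_gt 1 γ with h | h
      · have h1' : t ^ (γ - 1) ≤ (max 1 r₂) ^ (γ - 1) :=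
          Real.rpow_le_rpow htpos.le (ht.2.trans (le_max_right _ _)) (by linarith)
        have h2' : (max 1 r₂) ^ (γ - 1) ≤ (max 1 r₂) ^ (1 : ℝ) :=
          Real.rpow_le_rpow_of_exponent_le (le_max_left _ _) (by linarith)
        have h3' : t ^ (γ - 1) ≤ max 1 r₂ := by
          rw [Real.rpow_one] at h2'; exact h1'.trans h2'
        exact h3'.trans (le_mul_of_one_le_right (le_trans zero_le_one (le_max_left _ _))
          (le_max_left _ _))
      · have h1' : t ^ (γ - 1) ≤ r₁ ^ (γ - 1) :=
          Real.rpow_le_rpow_of_nonpos h1 ht.1 (by linarith)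
        have h2' : r₁ ^ (γ - 1) = (r₁⁻¹) ^ (1 - γ) := by
          rw [Real.inv_rpow h1.le, ← Real.rpow_neg h1.le, neg_sub]
        have h3' : (r₁⁻¹) ^ (1 - γ) ≤ (max 1 r₁⁻¹) ^ (1 - γ) :=
          Real.rpow_le_rpow (inv_nonneg.2 h1.le) (le_max_right _ _) (by linarith)
        have h4' : (max 1 r₁⁻¹) ^ (1 - γ) ≤ (max 1 r₁⁻¹) ^ (1 : ℝ) :=
          Real.rpow_le_rpow_of_exponent_le (le_max_left _ _) (by linarith)
        rw [Real.rpow_one] at h4'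
        have h5' : t ^ (γ - 1) ≤ max 1 r₁⁻¹ := by
          rw [h2'] at h1'; exact h1'.trans (h3'.trans h4')
        calc t ^ (γ - 1) ≤ max 1 r₁⁻¹ := h5'
          _ ≤ max 1 r₂ * max 1 r₁⁻¹ :=
            le_mul_of_one_le_left (le_trans zero_le_one (le_max_left _ _)) (le_max_left _ _)
    have hpnn : (0:ℝ) ≤ t ^ (γ - 1) := Real.rpow_nonneg htpos.le _
    rw [Real.norm_eq_abs, abs_mul, abs_of_pos hγ0, abs_of_nonneg hpnn]
    calc γ * t ^ (γ - 1) ≤ 2 * (max 1 r₂ * max 1 r₁⁻¹) := by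
          apply mul_le_mul hγ2 hpow hpnn (by norm_num)
      _ = 2 * max 1 r₂ * max 1 r₁⁻¹ := by ring
  have := Convex.norm_image_sub_le_of_norm_hasDerivWithin_le hderiv hbound (convex_Icc r₁ r₂) hb ha
  simpa [Real.norm_eq_abs, abs_sub_comm] using this

private lemma unit_sub_le {n : ℕ} (x y : E n) (hx : 0 < ‖x‖) (hy : 0 < ‖y‖) :
    ‖‖x‖⁻¹ • x - ‖y‖⁻¹ • y‖ ≤ 2 / ‖x‖ * ‖x - y‖ := by
  have key : ‖x‖⁻¹ • x - ‖y‖⁻¹ • y = ‖x‖⁻¹ • (x - y) + (‖x‖⁻¹ - ‖y‖⁻¹) • y := by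
    module
  rw [key]
  have h1 : ‖‖x‖⁻¹ • (x - y)‖ = ‖x‖⁻¹ * ‖x - y‖ := by
    rw [norm_smul, Real.norm_eq_abs, abs_of_pos (inv_pos.2 hx)]
  have h2 : ‖(‖x‖⁻¹ - ‖y‖⁻¹) • y‖ ≤ ‖x‖⁻¹ * ‖x - y‖ := by
    rw [norm_smul, Real.norm_eq_abs]
    have heq : |‖x‖⁻¹ - ‖y‖⁻¹| * ‖y‖ = |‖y‖ - ‖x‖| * ‖x‖⁻¹ := by
      rw [show ‖x‖⁻¹ - ‖y‖⁻¹ = (‖y‖ - ‖x‖) * (‖x‖⁻¹ * ‖y‖⁻¹) by field_simp,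
        abs_mul, abs_mul, abs_of_pos (inv_pos.2 hx), abs_of_pos (inv_pos.2 hy)]
      field_simp
    rw [heq]
    have : |‖y‖ - ‖x‖| ≤ ‖x - y‖ := by
      rw [abs_sub_comm]
      exact abs_norm_sub_norm_le x y
    calc |‖y‖ - ‖x‖| * ‖x‖⁻¹ ≤ ‖x - y‖ * ‖x‖⁻¹ :=
          mul_le_mul_of_nonneg_right this (inv_nonneg.2 hx.le)
      _ = ‖x‖⁻¹ * ‖x - y‖ := by ring
  calc ‖‖x‖⁻¹ • (x - y) + (‖x‖⁻¹ - ‖y‖⁻¹) • y‖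
      ≤ ‖‖x‖⁻¹ • (x - y)‖ + ‖(‖x‖⁻¹ - ‖y‖⁻¹) • y‖ := norm_add_le _ _
    _ ≤ ‖x‖⁻¹ * ‖x - y‖ + ‖x‖⁻¹ * ‖x - y‖ := by rw [h1]; linarith
    _ = 2 / ‖x‖ * ‖x - y‖ := by field_simp; ring

theorem statement15 (n : ℕ) (hn : 2 ≤ n) (α : ℝ) (hα : α ∈ Set.Ioo (0 : ℝ) 1)
    (r₁ r₂ : ℝ) (hr₁ : 0 < r₁) (hr : r₁ < r₂) :
    ∃ c : ℝ, 0 < c ∧ ∀ s₀ ∈ Set.Ioo (max (1 / 2) α) 1, ∀ γ ∈ Set.Ico ((2 * s₀ - 1) / 2) 2,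
      ∀ u : E n → ℝ, (∀ x, 0 ≤ u x) → IsHomog n γ u →
      IsLUB (u '' {x : E n | ‖x‖ = 1}) 1 →
      (∃ z₀ : E n, ‖z₀‖ = 1 ∧ u z₀ = 0) →
      ∀ L : ℝ, (∀ x y : E n, ‖x‖ = 1 → ‖y‖ = 1 → |u x - u y| ≤ L * ‖x - y‖ ^ α) →
      ∀ x y : E n, r₁ < ‖x‖ → ‖x‖ < r₂ → r₁ < ‖y‖ → ‖y‖ < r₂ →
        |u x - u y| ≤ c * L * ‖x - y‖ ^ α := by
  obtain ⟨hα0, hα1⟩ := hα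
  set M₂ : ℝ := max 1 r₂ with hM₂def
  set M₁ : ℝ := max 1 r₁⁻¹ with hM₁def
  set D : ℝ := 2 * M₂ * M₁ with hDdef
  have hM₂1 : (1:ℝ) ≤ M₂ := le_max_left _ _
  have hM₁1 : (1:ℝ) ≤ M₁ := le_max_left _ _
  have hM₂0 : (0:ℝ) < M₂ := lt_of_lt_of_le one_pos hM₂1
  have hM₁0 : (0:ℝ) < M₁ := lt_of_lt_of_le one_pos hM₁1
  have hD0 : (0:ℝ) < D := by positivity
  have hr₂0 : (0:ℝ) < r₂ := hr₁.trans hr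
  set c : ℝ := M₂ ^ (2:ℝ) * (2 / r₁) ^ α + 2 ^ α * D * (2 * r₂) ^ (1 - α) with hcdef
  have hc0 : 0 < c := by
    have h1 : (0:ℝ) < M₂ ^ (2:ℝ) := Real.rpow_pos_of_pos hM₂0 _
    have h2 : (0:ℝ) < (2 / r₁) ^ α := Real.rpow_pos_of_pos (by positivity) _
    have h3 : (0:ℝ) < (2:ℝ) ^ α := Real.rpow_pos_of_pos two_pos _
    have h4 : (0:ℝ) < (2 * r₂) ^ (1 - α) := Real.rpow_pos_of_pos (by positivity) _
    positivity
  refine ⟨c, hc0, ?_⟩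
  intro s₀ hs₀ γ hγ u hupos hhom hlub hz L hL x y hx1 hx2 hy1 hy2
  obtain ⟨z₀, hz₀, huz₀⟩ := hz
  have hs₀1 : 1 / 2 < s₀ := lt_of_le_of_lt (le_max_left _ _) hs₀.1
  have hγ0 : 0 < γ := lt_of_lt_of_le (by linarith) hγ.1
  have hγ2 : γ < 2 := hγ.2
  -- L is positive and 1 ≤ L * 2^α
  have hL2 : ∀ z : E n, ‖z‖ = 1 → u z ≤ L * ‖z - z₀‖ ^ α := by
    intro z hzn
    have h := hL z z₀ hzn hz₀
    rw [huz₀, sub_zero] at h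
    exact (le_abs_self _).trans h
  have hLpos : 0 < L := by
    obtain ⟨w, hw, hw2, _⟩ := hlub.exists_between (by norm_num : (1/2 : ℝ) < 1)
    obtain ⟨z, hzs, rfl⟩ := hw
    have h1 : (0:ℝ) < u z := by linarith
    have h2 := hL2 z hzs
    have hzne : z ≠ z₀ := by
      rintro rfl; rw [huz₀] at h1; linarith
    have hnz : 0 < ‖z - z₀‖ ^ α :=
      Real.rpow_pos_of_pos (norm_pos_iff.2 (sub_ne_zero.2 hzne)) α
    nlinarith
  have hub : 1 ≤ L * 2 ^ α := by
    refine hlub.2 ?_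
    rintro w ⟨z, hzs, rfl⟩
    have hle : ‖z - z₀‖ ≤ 2 := by
      calc ‖z - z₀‖ ≤ ‖z‖ + ‖z₀‖ := norm_sub_le _ _
        _ = 2 := by rw [hzs, hz₀]; norm_num
    calc u z ≤ L * ‖z - z₀‖ ^ α := hL2 z hzs
      _ ≤ L * 2 ^ α :=
        mul_le_mul_of_nonneg_left (Real.rpow_le_rpow (norm_nonneg _) hle hα0.le) hLpos.le
  -- trivial case x = y
  rcases eq_or_ne x y with rfl | hxy
  · simp [Real.zero_rpow hα0.ne']
  have hd : 0 < ‖x - y‖ := norm_pos_iff.2 (sub_ne_zero.2 hxy)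
  -- homogeneity decomposition
  have hxpos : 0 < ‖x‖ := hr₁.trans hx1
  have hypos : 0 < ‖y‖ := hr₁.trans hy1
  set a : ℝ := ‖x‖ with hadef
  set b : ℝ := ‖y‖ with hbdef
  set xh : E n := a⁻¹ • x with hxhdef
  set yh : E n := b⁻¹ • y with hyhdef
  have hxh : ‖xh‖ = 1 := by
    rw [hxhdef, norm_smul, Real.norm_eq_abs, abs_of_pos (inv_pos.2 hxpos)]
    field_simp
    exact hadef.symm
  have hyh : ‖yh‖ = 1 := by
    rw [hyhdef, norm_smul, Real.norm_eq_abs, abs_of_pos (inv_pos.2 hypos)]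
    field_simp
    exact hbdef.symm
  have hux : u x = a ^ γ * u xh := by
    have hxhne : xh ≠ 0 := by
      intro h; rw [h, norm_zero] at hxh; norm_num at hxh
    have h := hhom.2 xh hxhne a hxpos
    rw [hxhdef, smul_smul, mul_inv_cancel₀ hxpos.ne', one_smul] at h
    exact h
  have huy : u y = b ^ γ * u yh := by
    have hyhne : yh ≠ 0 := by
      intro h; rw [h, norm_zero] at hyh; norm_num at hyh
    have h := hhom.2 yh hyhne b hypos
    rw [hyhdef, smul_smul, mul_inv_cancel₀ hypos.ne', one_smul] at h
    exact h
  -- split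
  have hsplit : |u x - u y| ≤ a ^ γ * |u xh - u yh| + u yh * |a ^ γ - b ^ γ| := by
    have hkey : u x - u y = a ^ γ * (u xh - u yh) + u yh * (a ^ γ - b ^ γ) := by
      rw [hux, huy]; ring
    rw [hkey]
    calc |a ^ γ * (u xh - u yh) + u yh * (a ^ γ - b ^ γ)|
        ≤ |a ^ γ * (u xh - u yh)| + |u yh * (a ^ γ - b ^ γ)| := abs_add_le _ _
      _ = a ^ γ * |u xh - u yh| + u yh * |a ^ γ - b ^ γ| := by
          rw [abs_mul, abs_mul, abs_of_nonneg (Real.rpow_nonneg hxpos.le _),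
            abs_of_nonneg (hupos yh)]
  -- first term
  have hA : a ^ γ ≤ M₂ ^ (2:ℝ) :=
    calc a ^ γ ≤ M₂ ^ γ :=
        Real.rpow_le_rpow hxpos.le (hx2.le.trans (le_max_right _ _)) hγ0.le
      _ ≤ M₂ ^ (2:ℝ) := Real.rpow_le_rpow_of_exponent_le hM₂1 hγ2.le
  have hsubnorm : ‖xh - yh‖ ≤ 2 / r₁ * ‖x - y‖ := by
    calc ‖xh - yh‖ ≤ 2 / a * ‖x - y‖ := unit_sub_le x y hxpos hypos
      _ ≤ 2 / r₁ * ‖x - y‖ := by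
        apply mul_le_mul_of_nonneg_right _ (norm_nonneg _)
        exact div_le_div_of_nonneg_left (by norm_num) hr₁ hx1.le
  have hhol : |u xh - u yh| ≤ L * ((2 / r₁) ^ α * ‖x - y‖ ^ α) := by
    calc |u xh - u yh| ≤ L * ‖xh - yh‖ ^ α := hL xh yh hxh hyh
      _ ≤ L * (2 / r₁ * ‖x - y‖) ^ α :=
          mul_le_mul_of_nonneg_left
            (Real.rpow_le_rpow (norm_nonneg _) hsubnorm hα0.le) hLpos.le
      _ = L * ((2 / r₁) ^ α * ‖x - y‖ ^ α) := by
          rw [Real.mul_rpow (by positivity) (norm_nonneg _)]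
  have hterm1 : a ^ γ * |u xh - u yh| ≤ M₂ ^ (2:ℝ) * (2 / r₁) ^ α * L * ‖x - y‖ ^ α := by
    calc a ^ γ * |u xh - u yh| ≤ M₂ ^ (2:ℝ) * (L * ((2 / r₁) ^ α * ‖x - y‖ ^ α)) :=
        mul_le_mul hA hhol (abs_nonneg _) (Real.rpow_nonneg hM₂0.le _)
      _ = M₂ ^ (2:ℝ) * (2 / r₁) ^ α * L * ‖x - y‖ ^ α := by ring
  -- second term
  have hlip := rpow_lip hγ0 hγ2.le hr₁ a b ⟨hx1.le, hx2.le⟩ ⟨hy1.le, hy2.le⟩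
  have habd : |a - b| ≤ ‖x - y‖ := abs_norm_sub_norm_le x y
  have hd2 : ‖x - y‖ ≤ 2 * r₂ := by
    calc ‖x - y‖ ≤ ‖x‖ + ‖y‖ := norm_sub_le _ _
      _ ≤ 2 * r₂ := by linarith
  have hdsplit : ‖x - y‖ ≤ (2 * r₂) ^ (1 - α) * ‖x - y‖ ^ α := by
    have heq : ‖x - y‖ = ‖x - y‖ ^ (1 - α) * ‖x - y‖ ^ α := by
      rw [← Real.rpow_add hd]
      norm_num
    conv_lhs => rw [heq]
    apply mul_le_mul_of_nonneg_right _ (Real.rpow_nonneg (norm_nonneg _) _)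
    exact Real.rpow_le_rpow hd.le hd2 (by linarith)
  have huyh1 : u yh ≤ 1 := hlub.1 ⟨yh, hyh, rfl⟩
  have hterm2 : u yh * |a ^ γ - b ^ γ| ≤ 2 ^ α * D * (2 * r₂) ^ (1 - α) * L * ‖x - y‖ ^ α := by
    have hstep1 : u yh * |a ^ γ - b ^ γ| ≤ 1 * (D * ((2 * r₂) ^ (1 - α) * ‖x - y‖ ^ α)) := by
      apply mul_le_mul huyh1 _ (abs_nonneg _) one_pos.le
      calc |a ^ γ - b ^ γ| ≤ D * |a - b| := hlip
        _ ≤ D * ‖x - y‖ := mul_le_mul_of_nonneg_left habd hD0.le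
        _ ≤ D * ((2 * r₂) ^ (1 - α) * ‖x - y‖ ^ α) :=
            mul_le_mul_of_nonneg_left hdsplit hD0.le
    have hstep2 : (1:ℝ) * (D * ((2 * r₂) ^ (1 - α) * ‖x - y‖ ^ α)) ≤
        (L * 2 ^ α) * (D * ((2 * r₂) ^ (1 - α) * ‖x - y‖ ^ α)) := by
      apply mul_le_mul_of_nonneg_right hub
      have := Real.rpow_nonneg (norm_nonneg (x - y)) α
      have := Real.rpow_nonneg (by positivity : (0:ℝ) ≤ 2 * r₂) (1 - α)
      positivity
    calc u yh * |a ^ γ - b ^ γ| ≤ (L * 2 ^ α) * (D * ((2 * r₂) ^ (1 - α) * ‖x - y‖ ^ α)) :=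
        hstep1.trans hstep2
      _ = 2 ^ α * D * (2 * r₂) ^ (1 - α) * L * ‖x - y‖ ^ α := by ring
  calc |u x - u y| ≤ a ^ γ * |u xh - u yh| + u yh * |a ^ γ - b ^ γ| := hsplit
    _ ≤ M₂ ^ (2:ℝ) * (2 / r₁) ^ α * L * ‖x - y‖ ^ α
        + 2 ^ α * D * (2 * r₂) ^ (1 - α) * L * ‖x - y‖ ^ α := add_le_add hterm1 hterm2
    _ = c * L * ‖x - y‖ ^ α := by rw [hcdef]; ring
end
end
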